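/- arXiv:1903.07419 — 8 statements merged into one kernel-verified Lean document; each statement's English description precedes it below -/
import Mathlib

section
/- If (A,V) and (B,W) are both automorphism groups of edge-colored graphs, then their direct product (A×B, V×W) is the automorphism group of an edge-colored graph; likewise, if (A,V) and (B,W) are both automorphism groups of edge-colored digraphs, then (A×B, V×W) is the automorphism group of an edge-colored digraph. In symbols: if A, B ∈ GR then A×B ∈ GR, and if A, B ∈ DGR then A×B ∈ DGR. -/
/-- A permutation `σ` is an automorphism of the edge-colored graph on `V`
with edge-color function `E`. -/
def IsGraphAut {V C : Type} (E : Sym2 V → C) (σ : Equiv.Perm V) : Prop :=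
  ∀ v w : V, v ≠ w → E s(σ v, σ w) = E s(v, w)

/-- A permutation `σ` is an automorphism of the edge-colored digraph on `V`
with edge-color function `E`. -/
def IsDigraphAut {V C : Type} (E : V × V → C) (σ : Equiv.Perm V) : Prop :=
  ∀ v w : V, v ≠ w → E (σ v, σ w) = E (v, w)

/-- A permutation group `(A, V)` belongs to the class `GR` iff it is the
automorphism group of an edge-colored graph on `V`. -/
def IsGR {V : Type} (A : Subgroup (Equiv.Perm V)) : Prop :=
  ∃ (C : Type) (E : Sym2 V → C), ∀ σ : Equiv.Perm V, σ ∈ A ↔ IsGraphAut E σ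

/-- A permutation group `(A, V)` belongs to the class `DGR` iff it is the
automorphism group of an edge-colored digraph on `V`. -/
def IsDGR {V : Type} (A : Subgroup (Equiv.Perm V)) : Prop :=
  ∃ (C : Type) (E : V × V → C), ∀ σ : Equiv.Perm V, σ ∈ A ↔ IsDigraphAut E σ

/-- The product-action homomorphism `Perm V × Perm W →* Perm (V × W)`,
`(a, b) (x, y) = (a x, b y)`. -/
def permProdHom (V W : Type) : Equiv.Perm V × Equiv.Perm W →* Equiv.Perm (V × W) where
  toFun p := Equiv.prodCongr p.1 p.2
  map_one' := Equiv.ext fun _ => rfl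
  map_mul' _ _ := Equiv.ext fun _ => rfl

/-- The direct product of the permutation groups `(A, V)` and `(B, W)`,
acting on `V × W` with the product action. -/
def PermProd {V W : Type} (A : Subgroup (Equiv.Perm V)) (B : Subgroup (Equiv.Perm W)) :
    Subgroup (Equiv.Perm (V × W)) :=
  (A.prod B).map (permProdHom V W)

/-- The Or-orbital of the ordered pair `(v₁, v₂)` under `A`. -/
def Orbital {V : Type} (A : Subgroup (Equiv.Perm V)) (v₁ v₂ : V) : Set (V × V) :=
  {p | ∃ a ∈ A, p = (a v₁, a v₂)}

/-- The Or-orbital of `(v₁, v₂)` is self-paired: it coincides with the orbital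
consisting of the reversed pairs. -/
def SelfPaired {V : Type} (A : Subgroup (Equiv.Perm V)) (v₁ v₂ : V) : Prop :=
  Orbital A v₁ v₂ = Orbital A v₂ v₁

/-- The orbit of `v` under the permutation group `A`. -/
def OrbitOf {V : Type} (A : Subgroup (Equiv.Perm V)) (v : V) : Set V :=
  {x | ∃ a ∈ A, x = a v}

/-- `σ` maps every NOr-orbital (orbit on unordered pairs of distinct elements)
of `A` onto itself. -/
def PreservesNOrOrbitals {V : Type} (A : Subgroup (Equiv.Perm V)) (σ : Equiv.Perm V) : Prop :=
  ∀ v w : V, v ≠ w → ∃ a ∈ A, s(σ v, σ w) = s(a v, a w)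

/-- `σ` maps every Or-orbital (orbit on ordered pairs of distinct elements)
of `A` onto itself. -/
def PreservesOrOrbitals {V : Type} (A : Subgroup (Equiv.Perm V)) (σ : Equiv.Perm V) : Prop :=
  ∀ v w : V, v ≠ w → ∃ a ∈ A, σ v = a v ∧ σ w = a w

/-- `Ā`: the set of all permutations of `V` mapping every NOr-orbital of `A`
onto itself (the smallest group in `GR` containing `A`). -/
def grClosure {V : Type} (A : Subgroup (Equiv.Perm V)) : Set (Equiv.Perm V) :=
  {σ | PreservesNOrOrbitals A σ}

/-- `σ` pairs all the pairs of paired Or-orbitals of `A`: for every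
non-self-paired Or-orbital `O`, the image of `O` under `σ` is the paired
orbital `O*`. -/
def PairsAllPairedOrbitals {V : Type} (A : Subgroup (Equiv.Perm V)) (σ : Equiv.Perm V) : Prop :=
  ∀ v₁ v₂ : V, v₁ ≠ v₂ → ¬ SelfPaired A v₁ v₂ →
    (fun p : V × V => (σ p.1, σ p.2)) '' Orbital A v₁ v₂ = Orbital A v₂ v₁

/-- The permutation group `(A, V)` is the group `I₂`: the trivial group acting
on a two-element set. -/
def IsI₂ {V : Type} [Fintype V] (A : Subgroup (Equiv.Perm V)) : Prop :=
  Fintype.card V = 2 ∧ A = ⊥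

open scoped Classical

lemma option_ite_eq {α : Type} {P Q : Prop} [Decidable P] [Decidable Q] {x y : α}
    (h : (if P then (none : Option α) else some x) = if Q then none else some y) :
    (P ↔ Q) ∧ (¬P → x = y) := by
  by_cases hp : P <;> by_cases hq : Q <;> simp [hp, hq] at h ⊢ <;> tauto

lemma prod_split {V W : Type} [Finite V] [Finite W] [Nonempty V] [Nonempty W]
    (σ : Equiv.Perm (V × W))
    (h1 : ∀ p q : V × W, (σ p).1 = (σ q).1 ↔ p.1 = q.1)
    (h2 : ∀ p q : V × W, (σ p).2 = (σ q).2 ↔ p.2 = q.2) :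
    ∃ (f : Equiv.Perm V) (g : Equiv.Perm W),
      σ = Equiv.prodCongr f g ∧ ∀ v w, σ (v, w) = (f v, g w) := by
  obtain ⟨v0⟩ : Nonempty V := inferInstance
  obtain ⟨w0⟩ : Nonempty W := inferInstance
  have finj : Function.Injective (fun v : V => (σ (v, w0)).1) := by
    intro v v' h
    exact (h1 (v, w0) (v', w0)).mp h
  have ginj : Function.Injective (fun w : W => (σ (v0, w)).2) := by
    intro w w' h
    exact (h2 (v0, w) (v0, w')).mp h
  let f := Equiv.ofBijective _ (Finite.injective_iff_bijective.mp finj)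
  let g := Equiv.ofBijective _ (Finite.injective_iff_bijective.mp ginj)
  have key : ∀ v w, σ (v, w) = (f v, g w) := by
    intro v w
    have e1 : (σ (v, w)).1 = (σ (v, w0)).1 := (h1 _ _).mpr rfl
    have e2 : (σ (v, w)).2 = (σ (v0, w)).2 := (h2 _ _).mpr rfl
    exact Prod.ext e1 e2
  refine ⟨f, g, ?_, key⟩
  exact Equiv.ext fun ⟨v, w⟩ => by simp [key v w, Equiv.prodCongr_apply]

/-- If `A, B ∈ GR`, then `A × B ∈ GR`; if `A, B ∈ DGR`, then `A × B ∈ DGR`. -/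
theorem gr_prod_and_dgr_prod {V W : Type} [Fintype V] [Fintype W]
    (A : Subgroup (Equiv.Perm V)) (B : Subgroup (Equiv.Perm W)) :
    (IsGR A → IsGR B → IsGR (PermProd A B)) ∧
    (IsDGR A → IsDGR B → IsDGR (PermProd A B)) := by
  constructor
  · rintro ⟨CA, EA, hA⟩ ⟨CB, EB, hB⟩
    set F : V × W → V × W → Option CA × Option CB := fun p q =>
      (if p.1 = q.1 then none else some (EA s(p.1, q.1)),
       if p.2 = q.2 then none else some (EB s(p.2, q.2))) with hF
    have hFsymm : ∀ p q, F p q = F q p := by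
      intro p q
      refine Prod.ext ?_ ?_ <;> simp only [hF]
      · rcases eq_or_ne p.1 q.1 with h | h
        · simp [h]
        · rw [if_neg h, if_neg (Ne.symm h), Sym2.eq_swap]
      · rcases eq_or_ne p.2 q.2 with h | h
        · simp [h]
        · rw [if_neg h, if_neg (Ne.symm h), Sym2.eq_swap]
    refine ⟨Option CA × Option CB, Sym2.lift ⟨F, hFsymm⟩, fun σ => ?_⟩
    constructor
    · rintro ⟨⟨a, b⟩, hab, rfl⟩
      obtain ⟨ha, hb⟩ := Subgroup.mem_prod.mp hab
      intro p q hpq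
      simp only [Sym2.lift_mk]
      have happ : ∀ r : V × W, (permProdHom V W) (a, b) r = (a r.1, b r.2) := fun r => rfl
      rw [happ, happ]
      refine Prod.ext ?_ ?_ <;> simp only [hF]
      · rcases eq_or_ne p.1 q.1 with h | h
        · simp [h]
        · rw [if_neg (fun he => h (a.injective he)), if_neg h,
            (hA a).mp ha p.1 q.1 h]
      · rcases eq_or_ne p.2 q.2 with h | h
        · simp [h]
        · rw [if_neg (fun he => h (b.injective he)), if_neg h,
            (hB b).mp hb p.2 q.2 h]
    · intro hσ
      by_cases hVW : Nonempty (V × W)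
      · obtain ⟨⟨v0, w0⟩⟩ := hVW
        haveI : Nonempty V := ⟨v0⟩
        haveI : Nonempty W := ⟨w0⟩
        have key : ∀ p q : V × W, p ≠ q → F (σ p) (σ q) = F p q := by
          intro p q h
          have := hσ p q h
          simpa only [Sym2.lift_mk] using this
        have h1 : ∀ p q : V × W, (σ p).1 = (σ q).1 ↔ p.1 = q.1 := by
          intro p q
          rcases eq_or_ne p q with rfl | h
          · simp
          · exact (option_ite_eq (congrArg Prod.fst (key p q h))).1
        have h2 : ∀ p q : V × W, (σ p).2 = (σ q).2 ↔ p.2 = q.2 := by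
          intro p q
          rcases eq_or_ne p q with rfl | h
          · simp
          · exact (option_ite_eq (congrArg Prod.snd (key p q h))).1
        obtain ⟨f, g, hfg, hk⟩ := prod_split σ h1 h2
        have hfA : f ∈ A := by
          refine (hA f).mpr fun v v' hvv' => ?_
          have hpq : (v, w0) ≠ (v', w0) := fun he => hvv' (congrArg Prod.fst he)
          have := congrArg Prod.fst (key _ _ hpq)
          rw [hk, hk] at this
          have h2 := (option_ite_eq this).2 (fun he => hvv' (f.injective he))
          exact h2
        have hgB : g ∈ B := by
          refine (hB g).mpr fun w w' hww' => ?_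
          have hpq : (v0, w) ≠ (v0, w') := fun he => hww' (congrArg Prod.snd he)
          have := congrArg Prod.snd (key _ _ hpq)
          rw [hk, hk] at this
          exact (option_ite_eq this).2 (fun he => hww' (g.injective he))
        exact ⟨(f, g), Subgroup.mem_prod.mpr ⟨hfA, hgB⟩, hfg.symm⟩
      · have hσ1 : σ = 1 := Equiv.ext fun x => absurd ⟨x⟩ hVW
        rw [hσ1]; exact one_mem _
  · rintro ⟨CA, EA, hA⟩ ⟨CB, EB, hB⟩
    set F : (V × W) × (V × W) → Option CA × Option CB := fun pq =>
      (if pq.1.1 = pq.2.1 then none else some (EA (pq.1.1, pq.2.1)),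
       if pq.1.2 = pq.2.2 then none else some (EB (pq.1.2, pq.2.2))) with hF
    refine ⟨Option CA × Option CB, F, fun σ => ?_⟩
    constructor
    · rintro ⟨⟨a, b⟩, hab, rfl⟩
      obtain ⟨ha, hb⟩ := Subgroup.mem_prod.mp hab
      intro p q hpq
      have happ : ∀ r : V × W, (permProdHom V W) (a, b) r = (a r.1, b r.2) := fun r => rfl
      rw [happ, happ]
      refine Prod.ext ?_ ?_ <;> simp only [hF]
      · rcases eq_or_ne p.1 q.1 with h | h
        · simp [h]
        · rw [if_neg (fun he => h (a.injective he)), if_neg h,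
            (hA a).mp ha p.1 q.1 h]
      · rcases eq_or_ne p.2 q.2 with h | h
        · simp [h]
        · rw [if_neg (fun he => h (b.injective he)), if_neg h,
            (hB b).mp hb p.2 q.2 h]
    · intro hσ
      by_cases hVW : Nonempty (V × W)
      · obtain ⟨⟨v0, w0⟩⟩ := hVW
        haveI : Nonempty V := ⟨v0⟩
        haveI : Nonempty W := ⟨w0⟩
        have key : ∀ p q : V × W, p ≠ q → F (σ p, σ q) = F (p, q) := fun p q h => hσ p q h
        have h1 : ∀ p q : V × W, (σ p).1 = (σ q).1 ↔ p.1 = q.1 := by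
          intro p q
          rcases eq_or_ne p q with rfl | h
          · simp
          · exact (option_ite_eq (congrArg Prod.fst (key p q h))).1
        have h2 : ∀ p q : V × W, (σ p).2 = (σ q).2 ↔ p.2 = q.2 := by
          intro p q
          rcases eq_or_ne p q with rfl | h
          · simp
          · exact (option_ite_eq (congrArg Prod.snd (key p q h))).1
        obtain ⟨f, g, hfg, hk⟩ := prod_split σ h1 h2
        have hfA : f ∈ A := by
          refine (hA f).mpr fun v v' hvv' => ?_
          have hpq : (v, w0) ≠ (v', w0) := fun he => hvv' (congrArg Prod.fst he)
          have := congrArg Prod.fst (key _ _ hpq)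
          rw [hk, hk] at this
          exact (option_ite_eq this).2 (fun he => hvv' (f.injective he))
        have hgB : g ∈ B := by
          refine (hB g).mpr fun w w' hww' => ?_
          have hpq : (v0, w) ≠ (v0, w') := fun he => hww' (congrArg Prod.snd he)
          have := congrArg Prod.snd (key _ _ hpq)
          rw [hk, hk] at this
          exact (option_ite_eq this).2 (fun he => hww' (g.injective he))
        exact ⟨(f, g), Subgroup.mem_prod.mpr ⟨hfA, hgB⟩, hfg.symm⟩
      · have hσ1 : σ = 1 := Equiv.ext fun x => absurd ⟨x⟩ hVW
        rw [hσ1]; exact one_mem _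
end

section
/- Let (A,V) and (B,W) be permutation groups. Every permutation of V × W that maps each NOr-orbital of the direct product A × B onto itself is of the form (x,y) ↦ (a(x), b(y)), where a is a permutation of V mapping each NOr-orbital of A onto itself and b is a permutation of W mapping each NOr-orbital of B onto itself. In other words, A × B ⊆ Aut(G(A×B)) ⊆ Ā × B̄, where G(A×B) is the edge-colored graph coloring each unordered pair of distinct elements of V×W by its (A×B)-NOr-orbital. -/
/-- `A × B ⊆ Aut(G(A × B)) ⊆ Ā × B̄`: every permutation of `V × W` preserving
all NOr-orbitals of `A × B` has the form `(x, y) ↦ (a x, b y)` with `a`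
preserving all NOr-orbitals of `A` and `b` preserving all NOr-orbitals of `B`. -/
theorem grClosure_prod_le {V W : Type} [Fintype V] [Fintype W]
    (A : Subgroup (Equiv.Perm V)) (B : Subgroup (Equiv.Perm W)) :
    ((PermProd A B : Subgroup (Equiv.Perm (V × W))) : Set (Equiv.Perm (V × W))) ⊆
        grClosure (PermProd A B) ∧
    ∀ σ ∈ grClosure (PermProd A B), ∃ (a : Equiv.Perm V) (b : Equiv.Perm W),
      PreservesNOrOrbitals A a ∧ PreservesNOrOrbitals B b ∧ σ = permProdHom V W (a, b) := by
  constructor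
  · intro σ hσ v w _
    exact ⟨σ, hσ, rfl⟩
  · intro σ hσ
    by_cases hV : Nonempty V
    · by_cases hW : Nonempty W
      · obtain ⟨x0⟩ := hV
        obtain ⟨y0⟩ := hW
        -- second coordinate of σ (x, y) is independent of x
        have hrow : ∀ (x x' : V) (y : W), (σ (x, y)).2 = (σ (x', y)).2 := by
          intro x x' y
          rcases eq_or_ne x x' with rfl | hne
          · rfl
          · obtain ⟨g, hg, heq⟩ := hσ (x, y) (x', y) (by simp [hne])
            obtain ⟨⟨a0, b0⟩, _, rfl⟩ := hg
            rw [Sym2.eq_iff] at heq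
            rcases heq with ⟨h1, h2⟩ | ⟨h1, h2⟩ <;>
              simp [h1, h2, permProdHom]
        -- first coordinate of σ (x, y) is independent of y
        have hcol : ∀ (x : V) (y y' : W), (σ (x, y)).1 = (σ (x, y')).1 := by
          intro x y y'
          rcases eq_or_ne y y' with rfl | hne
          · rfl
          · obtain ⟨g, hg, heq⟩ := hσ (x, y) (x, y') (by simp [hne])
            obtain ⟨⟨a0, b0⟩, _, rfl⟩ := hg
            rw [Sym2.eq_iff] at heq
            rcases heq with ⟨h1, h2⟩ | ⟨h1, h2⟩ <;>
              simp [h1, h2, permProdHom]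
        set fa : V → V := fun x => (σ (x, y0)).1 with hfa
        set fb : W → W := fun y => (σ (x0, y)).2 with hfb
        have hσeq : ∀ x y, σ (x, y) = (fa x, fb y) := by
          intro x y
          have h1 := hcol x y y0
          have h2 := hrow x x0 y
          exact Prod.ext h1 h2
        have hainj : Function.Injective fa := by
          intro x x' h
          have : σ (x, y0) = σ (x', y0) := by
            rw [hσeq, hσeq, h]
          exact (Prod.mk.injEq _ _ _ _).mp (σ.injective this) |>.1
        have hbinj : Function.Injective fb := by
          intro y y' h
          have : σ (x0, y) = σ (x0, y') := by
            rw [hσeq, hσeq, h]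
          exact (Prod.mk.injEq _ _ _ _).mp (σ.injective this) |>.2
        refine ⟨Equiv.ofBijective fa (Finite.injective_iff_bijective.mp hainj),
          Equiv.ofBijective fb (Finite.injective_iff_bijective.mp hbinj), ?_, ?_, ?_⟩
        · intro v v' hne
          obtain ⟨g, hg, heq⟩ := hσ (v, y0) (v', y0) (by simp [hne])
          obtain ⟨⟨a0, b0⟩, hab, rfl⟩ := hg
          rw [hσeq, hσeq] at heq
          have ha0 : a0 ∈ A := hab.1
          rw [Sym2.eq_iff] at heq
          refine ⟨a0, ha0, ?_⟩
          simp only [Equiv.ofBijective_apply]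
          have hap : ∀ (v1 : V) (w1 : W), (permProdHom V W (a0, b0)) (v1, w1) = (a0 v1, b0 w1) :=
            fun _ _ => rfl
          rw [hap, hap] at heq
          rcases heq with ⟨h1, h2⟩ | ⟨h1, h2⟩
          · rw [(Prod.mk.injEq _ _ _ _).mp h1 |>.1, (Prod.mk.injEq _ _ _ _).mp h2 |>.1]
          · rw [(Prod.mk.injEq _ _ _ _).mp h1 |>.1, (Prod.mk.injEq _ _ _ _).mp h2 |>.1]
            exact Sym2.eq_swap
        · intro w w' hne
          obtain ⟨g, hg, heq⟩ := hσ (x0, w) (x0, w') (by simp [hne])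
          obtain ⟨⟨a0, b0⟩, hab, rfl⟩ := hg
          rw [hσeq, hσeq] at heq
          have hb0 : b0 ∈ B := hab.2
          rw [Sym2.eq_iff] at heq
          refine ⟨b0, hb0, ?_⟩
          simp only [Equiv.ofBijective_apply]
          have hap : ∀ (v1 : V) (w1 : W), (permProdHom V W (a0, b0)) (v1, w1) = (a0 v1, b0 w1) :=
            fun _ _ => rfl
          rw [hap, hap] at heq
          rcases heq with ⟨h1, h2⟩ | ⟨h1, h2⟩
          · rw [(Prod.mk.injEq _ _ _ _).mp h1 |>.2, (Prod.mk.injEq _ _ _ _).mp h2 |>.2]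
          · rw [(Prod.mk.injEq _ _ _ _).mp h1 |>.2, (Prod.mk.injEq _ _ _ _).mp h2 |>.2]
            exact Sym2.eq_swap
        · exact Equiv.ext fun ⟨x, y⟩ => hσeq x y
      · have : IsEmpty W := not_nonempty_iff.mp hW
        refine ⟨1, 1, fun v w _ => ⟨1, A.one_mem, rfl⟩, fun v w _ => ⟨1, B.one_mem, rfl⟩, ?_⟩
        exact Equiv.ext fun p => isEmptyElim p.2
    · have : IsEmpty V := not_nonempty_iff.mp hV
      refine ⟨1, 1, fun v w _ => ⟨1, A.one_mem, rfl⟩, fun v w _ => ⟨1, B.one_mem, rfl⟩, ?_⟩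
      exact Equiv.ext fun p => isEmptyElim p.1
end

section
/- Let (A,V) be a permutation group with A ∉ GR and A ≠ I₂ (that is, it is not the case that V has exactly two elements and A is trivial). Then every permutation a ∈ Ā \ A maps each orbit of A on V onto itself. -/
lemma grClosure_key {V : Type} [Fintype V] (A : Subgroup (Equiv.Perm V))
    (hA2 : ¬ IsI₂ A) (a : Equiv.Perm V) (ha : a ∈ grClosure A) :
    ∀ v : V, a v ∈ OrbitOf A v := by
  intro v
  by_contra hv
  have hav : a v ≠ v := fun h => hv ⟨1, one_mem A, by simp [h]⟩
  have step1 : ∀ w, w ≠ v → a w ∈ OrbitOf A v ∧ a v ∈ OrbitOf A w := by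
    intro w hw
    obtain ⟨b, hb, hs⟩ := ha v w (Ne.symm hw)
    rw [Sym2.eq_iff] at hs
    rcases hs with ⟨h1, h2⟩ | ⟨h1, h2⟩
    · exact absurd ⟨b, hb, h1⟩ hv
    · exact ⟨⟨b, hb, h2⟩, ⟨b, hb, h1⟩⟩
  have fix : ∀ b ∈ A, b v = v := by
    intro b hb
    by_contra hbv
    obtain ⟨c, hc, hcv⟩ := (step1 (b v) hbv).2
    exact hv ⟨c * b, mul_mem hc hb, by simpa using hcv⟩
  have haw : ∀ w, w ≠ v → a w = v := by
    intro w hw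
    obtain ⟨⟨c, hc, hcv⟩, -⟩ := step1 w hw
    rw [hcv, fix c hc]
  have huniq : ∀ u : V, u = v ∨ u = a v := by
    intro u
    by_cases h1 : u = v
    · exact Or.inl h1
    · exact Or.inr (a.injective (by rw [haw u h1, haw (a v) hav]))
  refine hA2 ⟨?_, ?_⟩
  · rw [← Nat.card_eq_fintype_card, Nat.card_eq_two_iff]
    refine ⟨v, a v, Ne.symm hav, ?_⟩
    ext u
    simpa using (huniq u).imp id id
  · rw [Subgroup.eq_bot_iff_forall]
    intro b hb
    ext u
    rcases huniq u with rfl | rfl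
    · simpa using fix b hb
    · rcases huniq (b (a v)) with h | h
      · exact absurd (b.injective (by rw [h, fix b hb])) hav
      · simpa using h

/-- If `A ∉ GR` and `A ≠ I₂`, then every `a ∈ Ā \ A` maps each orbit of `A`
on `V` onto itself. -/
theorem grClosure_preserves_orbits {V : Type} [Fintype V] (A : Subgroup (Equiv.Perm V))
    (hA : ¬ IsGR A) (hA2 : ¬ IsI₂ A) :
    ∀ a ∈ grClosure A, a ∉ A → ∀ v : V, (⇑a) '' OrbitOf A v = OrbitOf A v := by
  intro a ha _ v
  have hsub : (⇑a) '' OrbitOf A v ⊆ OrbitOf A v := by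
    rintro y ⟨x, ⟨c, hc, rfl⟩, rfl⟩
    obtain ⟨d, hd, hdx⟩ := grClosure_key A hA2 a ha (c v)
    exact ⟨d * c, mul_mem hd hc, by simpa using hdx⟩
  refine Set.eq_of_subset_of_ncard_le hsub ?_ (Set.toFinite _)
  rw [Set.ncard_image_of_injective _ a.injective]
end

section
/- For permutation groups (A,V) and (B,W), the direct product A × B belongs to DGR if and only if both A ∈ DGR and B ∈ DGR. -/
lemma isDGR_iff_closed {V : Type} (A : Subgroup (Equiv.Perm V)) :
    IsDGR A ↔ ∀ σ : Equiv.Perm V, PreservesOrOrbitals A σ → σ ∈ A := by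
  constructor
  · rintro ⟨C, E, hE⟩ σ hσ
    rw [hE]
    intro v w hvw
    obtain ⟨a, ha, hv, hw⟩ := hσ v w hvw
    rw [hv, hw]
    exact (hE a).mp ha v w hvw
  · intro h
    refine ⟨Set (V × V), fun p => {q | ∃ a ∈ A, q = (a p.1, a p.2)}, fun σ => ⟨?_, ?_⟩⟩
    · intro hσ v w hvw
      ext q
      simp only [Set.mem_setOf_eq]
      constructor
      · rintro ⟨a, ha, rfl⟩
        exact ⟨a * σ, mul_mem ha hσ, rfl⟩
      · rintro ⟨a, ha, rfl⟩
        exact ⟨a * σ⁻¹, mul_mem ha (inv_mem hσ), by simp⟩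
    · intro hσ
      apply h
      intro v w hvw
      have h1 := hσ v w hvw
      have hmem : (σ v, σ w) ∈ (fun p : V × V => {q | ∃ a ∈ A, q = (a p.1, a p.2)}) (σ v, σ w) :=
        ⟨1, one_mem A, by simp⟩
      rw [h1] at hmem
      obtain ⟨a, ha, hq⟩ := hmem
      exact ⟨a, ha, congrArg Prod.fst hq, congrArg Prod.snd hq⟩

lemma mem_permProd_iff {V W : Type} {A : Subgroup (Equiv.Perm V)} {B : Subgroup (Equiv.Perm W)}
    {τ : Equiv.Perm (V × W)} :
    τ ∈ PermProd A B ↔ ∃ a ∈ A, ∃ b ∈ B, τ = Equiv.prodCongr a b := by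
  simp only [PermProd, Subgroup.mem_map, Subgroup.mem_prod, Prod.exists]
  constructor
  · rintro ⟨a, b, ⟨ha, hb⟩, h⟩
    exact ⟨a, ha, b, hb, h.symm⟩
  · rintro ⟨a, ha, b, hb, h⟩
    exact ⟨a, b, ⟨ha, hb⟩, h.symm⟩

/-- `A × B ∈ DGR` if and only if `A ∈ DGR` and `B ∈ DGR`. -/
theorem isDGR_prod_iff {V W : Type} [Fintype V] [Fintype W] [Nonempty V] [Nonempty W]
    (A : Subgroup (Equiv.Perm V)) (B : Subgroup (Equiv.Perm W)) :
    IsDGR (PermProd A B) ↔ IsDGR A ∧ IsDGR B := by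
  obtain ⟨w₀⟩ := ‹Nonempty W›
  obtain ⟨v₀⟩ := ‹Nonempty V›
  rw [isDGR_iff_closed, isDGR_iff_closed A, isDGR_iff_closed B]
  constructor
  · intro h
    constructor
    · -- A is closed
      intro σ hσ
      -- σ × 1 preserves orbitals of PermProd A B
      have hpres : PreservesOrOrbitals (PermProd A B) (Equiv.prodCongr σ (1 : Equiv.Perm W)) := by
        rintro ⟨v, w⟩ ⟨v', w'⟩ hne
        by_cases hv : v = v'
        · subst hv
          -- need a ∈ A with σ v = a v
          have : ∃ a ∈ A, σ v = a v := by
            by_cases hu : ∃ u : V, u ≠ v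
            · obtain ⟨u, hu⟩ := hu
              obtain ⟨a, ha, hav, _⟩ := hσ v u (Ne.symm hu)
              exact ⟨a, ha, hav⟩
            · push_neg at hu
              refine ⟨1, one_mem A, ?_⟩
              have h1 : σ v = v := hu (σ v)
              simpa using h1
          obtain ⟨a, ha, hav⟩ := this
          refine ⟨Equiv.prodCongr a 1, mem_permProd_iff.mpr ⟨a, ha, 1, one_mem B, rfl⟩, ?_, ?_⟩ <;>
            simp [Equiv.prodCongr_apply, hav]
        · obtain ⟨a, ha, hav, hav'⟩ := hσ v v' hv
          refine ⟨Equiv.prodCongr a 1, mem_permProd_iff.mpr ⟨a, ha, 1, one_mem B, rfl⟩, ?_, ?_⟩ <;>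
            simp [Equiv.prodCongr_apply, hav, hav']
      obtain ⟨a, ha, b, hb, hab⟩ := mem_permProd_iff.mp (h _ hpres)
      have key : ∀ v : V, σ v = a v := by
        intro v
        have := congrArg (fun τ : Equiv.Perm (V × W) => (τ (v, w₀)).1) hab
        simpa using this
      have : σ = a := Equiv.ext key
      rw [this]; exact ha
    · -- B is closed
      intro σ hσ
      have hpres : PreservesOrOrbitals (PermProd A B) (Equiv.prodCongr (1 : Equiv.Perm V) σ) := by
        rintro ⟨v, w⟩ ⟨v', w'⟩ hne
        by_cases hw : w = w'
        · subst hw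
          have : ∃ b ∈ B, σ w = b w := by
            by_cases hu : ∃ u : W, u ≠ w
            · obtain ⟨u, hu⟩ := hu
              obtain ⟨b, hb, hbw, _⟩ := hσ w u (Ne.symm hu)
              exact ⟨b, hb, hbw⟩
            · push_neg at hu
              refine ⟨1, one_mem B, ?_⟩
              have h1 : σ w = w := hu (σ w)
              simpa using h1
          obtain ⟨b, hb, hbw⟩ := this
          refine ⟨Equiv.prodCongr 1 b, mem_permProd_iff.mpr ⟨1, one_mem A, b, hb, rfl⟩, ?_, ?_⟩ <;>
            simp [Equiv.prodCongr_apply, hbw]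
        · obtain ⟨b, hb, hbw, hbw'⟩ := hσ w w' hw
          refine ⟨Equiv.prodCongr 1 b, mem_permProd_iff.mpr ⟨1, one_mem A, b, hb, rfl⟩, ?_, ?_⟩ <;>
            simp [Equiv.prodCongr_apply, hbw, hbw']
      obtain ⟨a, ha, b, hb, hab⟩ := mem_permProd_iff.mp (h _ hpres)
      have key : ∀ w : W, σ w = b w := by
        intro w
        have := congrArg (fun τ : Equiv.Perm (V × W) => (τ (v₀, w)).2) hab
        simpa using this
      have : σ = b := Equiv.ext key
      rw [this]; exact hb
  · rintro ⟨hA, hB⟩ τ hτ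
    -- unpack membership in PermProd from the orbital condition
    have hτ' : ∀ p q : V × W, p ≠ q →
        ∃ a ∈ A, ∃ b ∈ B, τ p = (a p.1, b p.2) ∧ τ q = (a q.1, b q.2) := by
      intro p q hpq
      obtain ⟨g, hg, hp, hq⟩ := hτ p q hpq
      obtain ⟨a, ha, b, hb, rfl⟩ := mem_permProd_iff.mp hg
      exact ⟨a, ha, b, hb, hp, hq⟩
    -- the first coordinate of τ (v, w) doesn't depend on w
    have hfst : ∀ v w w', (τ (v, w)).1 = (τ (v, w')).1 := by
      intro v w w'
      by_cases hw : w = w'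
      · rw [hw]
      · obtain ⟨a, _, b, _, hp, hq⟩ := hτ' (v, w) (v, w') (by simp [hw])
        rw [hp, hq]
    have hsnd : ∀ w v v', (τ (v, w)).2 = (τ (v', w)).2 := by
      intro w v v'
      by_cases hv : v = v'
      · rw [hv]
      · obtain ⟨a, _, b, _, hp, hq⟩ := hτ' (v, w) (v', w) (by simp [hv])
        rw [hp, hq]
    set f : V → V := fun v => (τ (v, w₀)).1 with hf
    set g : W → W := fun w => (τ (v₀, w)).2 with hg
    have hτeq : ∀ v w, τ (v, w) = (f v, g w) := by
      intro v w
      have h1 : (τ (v, w)).1 = f v := hfst v w w₀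
      have h2 : (τ (v, w)).2 = g w := hsnd w v v₀
      exact Prod.ext h1 h2
    have hfinj : Function.Injective f := by
      intro v v' hvv'
      by_contra hne
      obtain ⟨a, _, b, _, hp, hq⟩ := hτ' (v, w₀) (v', w₀) (by simp [hne])
      have : f v = a v := congrArg Prod.fst hp
      have h2 : f v' = a v' := congrArg Prod.fst hq
      exact hne (a.injective (by rw [← this, ← h2, hvv']))
    have hginj : Function.Injective g := by
      intro w w' hww'
      by_contra hne
      obtain ⟨a, _, b, _, hp, hq⟩ := hτ' (v₀, w) (v₀, w') (by simp [hne])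
      have : g w = b w := congrArg Prod.snd hp
      have h2 : g w' = b w' := congrArg Prod.snd hq
      exact hne (b.injective (by rw [← this, ← h2, hww']))
    let fe : Equiv.Perm V := Equiv.ofBijective f (Finite.injective_iff_bijective.mp hfinj)
    let ge : Equiv.Perm W := Equiv.ofBijective g (Finite.injective_iff_bijective.mp hginj)
    have hfeA : fe ∈ A := by
      apply hA
      intro v v' hvv'
      obtain ⟨a, ha, b, _, hp, hq⟩ := hτ' (v, w₀) (v', w₀) (by simp [hvv'])
      refine ⟨a, ha, ?_, ?_⟩
      · exact congrArg Prod.fst hp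
      · exact congrArg Prod.fst hq
    have hgeB : ge ∈ B := by
      apply hB
      intro w w' hww'
      obtain ⟨a, _, b, hb, hp, hq⟩ := hτ' (v₀, w) (v₀, w') (by simp [hww'])
      refine ⟨b, hb, ?_, ?_⟩
      · exact congrArg Prod.snd hp
      · exact congrArg Prod.snd hq
    apply mem_permProd_iff.mpr
    refine ⟨fe, hfeA, ge, hgeB, ?_⟩
    apply Equiv.ext
    rintro ⟨v, w⟩
    exact hτeq v w
end

section
/- Let (A,V) be a permutation group with A ∉ DGR and let (B,W) be an arbitrary permutation group. Then the direct product A × B does not belong to GR. -/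
lemma orbital_eq_of_mem {V : Type} (A : Subgroup (Equiv.Perm V)) {v w x y : V}
    (h : (x, y) ∈ Orbital A v w) : Orbital A x y = Orbital A v w := by
  obtain ⟨a, ha, hxy⟩ := h
  rw [Prod.ext_iff] at hxy
  obtain ⟨hx, hy⟩ := hxy
  subst hx; subst hy
  ext p
  constructor
  · rintro ⟨c, hc, rfl⟩
    exact ⟨c * a, mul_mem hc ha, by simp [Equiv.Perm.mul_apply]⟩
  · rintro ⟨c, hc, rfl⟩
    exact ⟨c * a⁻¹, mul_mem hc (inv_mem ha), by simp [Equiv.Perm.mul_apply]⟩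

lemma exists_preservesOrOrbitals {V : Type} (A : Subgroup (Equiv.Perm V)) (hA : ¬ IsDGR A) :
    ∃ σ : Equiv.Perm V, σ ∉ A ∧ PreservesOrOrbitals A σ := by
  set Ecan : V × V → Set (V × V) := fun p => Orbital A p.1 p.2 with hEcan
  have memAut : ∀ a : Equiv.Perm V, a ∈ A → IsDigraphAut Ecan a := by
    intro a ha v w _
    exact orbital_eq_of_mem A ⟨a, ha, rfl⟩
  by_contra h
  push_neg at h
  apply hA
  refine ⟨Set (V × V), Ecan, fun σ => ⟨memAut σ, fun haut => ?_⟩⟩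
  by_contra hn
  apply h σ hn
  intro v w hvw
  have : (σ v, σ w) ∈ Orbital A v w := by
    have := haut v w hvw
    simp only [hEcan] at this
    rw [← this]
    exact ⟨1, one_mem A, by simp⟩
  obtain ⟨a, ha, hp⟩ := this
  rw [Prod.ext_iff] at hp
  exact ⟨a, ha, hp⟩

/-- If `A ∉ DGR`, then `A × B ∉ GR` for every permutation group `B`. -/
theorem not_isGR_prod_of_not_isDGR {V W : Type} [Fintype V] [Fintype W] [Nonempty W]
    (A : Subgroup (Equiv.Perm V)) (B : Subgroup (Equiv.Perm W)) (hA : ¬ IsDGR A) :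
    ¬ IsGR (PermProd A B) := by
  rintro ⟨C, E, hE⟩
  -- V must be nontrivial, otherwise A ∈ DGR trivially.
  have hV : ∃ v v' : V, v ≠ v' := by
    by_contra h
    push_neg at h
    apply hA
    refine ⟨Unit, fun _ => (), fun σ => ⟨fun _ v w hvw => rfl, fun _ => ?_⟩⟩
    have : σ = 1 := Equiv.ext fun v => h _ _
    rw [this]; exact one_mem A
  obtain ⟨σ, hσA, hσ⟩ := exists_preservesOrOrbitals A hA
  -- σ fixes every point's A-orbit
  have hpt : ∀ v : V, ∃ a ∈ A, σ v = a v := by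
    intro v
    obtain ⟨v₀, v₁, h01⟩ := hV
    rcases eq_or_ne v v₀ with rfl | hne
    · obtain ⟨a, ha, h1, _⟩ := hσ v v₁ h01
      exact ⟨a, ha, h1⟩
    · obtain ⟨a, ha, h1, _⟩ := hσ v v₀ hne
      exact ⟨a, ha, h1⟩
  set τ : Equiv.Perm (V × W) := permProdHom V W (σ, 1) with hτ
  -- τ is an automorphism of E
  have hτAut : IsGraphAut E τ := by
    intro p q hpq
    obtain ⟨v₁, w₁⟩ := p
    obtain ⟨v₂, w₂⟩ := q
    have key : ∃ a ∈ A, σ v₁ = a v₁ ∧ σ v₂ = a v₂ := by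
      rcases eq_or_ne v₁ v₂ with rfl | hne
      · obtain ⟨a, ha, h1⟩ := hpt v₁
        exact ⟨a, ha, h1, h1⟩
      · exact hσ v₁ v₂ hne
    obtain ⟨a, ha, h1, h2⟩ := key
    have hπ : permProdHom V W (a, 1) ∈ PermProd A B :=
      ⟨(a, 1), Subgroup.mem_prod.mpr ⟨ha, one_mem B⟩, rfl⟩
    have haut := (hE _).mp hπ
    have := haut (v₁, w₁) (v₂, w₂) hpq
    have e1 : τ (v₁, w₁) = permProdHom V W (a, 1) (v₁, w₁) := by
      simp only [hτ, permProdHom, MonoidHom.coe_mk, OneHom.coe_mk, Equiv.prodCongr_apply,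
        Prod.map, h1]
    have e2 : τ (v₂, w₂) = permProdHom V W (a, 1) (v₂, w₂) := by
      simp only [hτ, permProdHom, MonoidHom.coe_mk, OneHom.coe_mk, Equiv.prodCongr_apply,
        Prod.map, h2]
    rw [e1, e2]
    exact this
  -- hence τ ∈ PermProd A B, which forces σ ∈ A, contradiction
  have hτmem : τ ∈ PermProd A B := (hE τ).mpr hτAut
  obtain ⟨⟨a, b⟩, hab, heq⟩ := hτmem
  apply hσA
  have : σ = a := by
    ext v
    obtain ⟨w⟩ := ‹Nonempty W›
    have := congrArg (fun f : Equiv.Perm (V × W) => (f (v, w)).1) heq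
    simpa [permProdHom, hτ] using this.symm
  rw [this]
  exact (Subgroup.mem_prod.mp hab).1
end

section
/- Let (A,V) be a permutation group with A ∈ DGR and A ∉ GR. Then the direct product A × I₂ belongs to GR. -/
open Classical in
noncomputable def ccol {V C : Type} (E : V × V → C) (p q : V × Fin 2) : Option (Fin 2 ⊕ C) :=
  if p.2 = q.2 then (if p.1 = q.1 then none else some (Sum.inl p.2))
  else if p.1 = q.1 then none
  else some (Sum.inr (if p.2 = 0 then E (p.1, q.1) else E (q.1, p.1)))

lemma ccol_symm {V C : Type} (E : V × V → C) (p q : V × Fin 2) :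
    ccol E p q = ccol E q p := by
  classical
  obtain ⟨v, i⟩ := p; obtain ⟨w, j⟩ := q
  rcases eq_or_ne v w with hv | hv <;> rcases eq_or_ne i j with hi | hi <;>
    fin_cases i <;> fin_cases j <;>
    simp_all [ccol, Ne.symm]

/-- If `A ∈ DGR \ GR`, then `A × I₂ ∈ GR`. -/
theorem isGR_prod_I₂_of_DGR {V : Type} [Fintype V] (A : Subgroup (Equiv.Perm V))
    (hA : IsDGR A) (hA' : ¬ IsGR A) :
    IsGR (PermProd A (⊥ : Subgroup (Equiv.Perm (Fin 2)))) := by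
  classical
  -- V must be nontrivial, otherwise A is trivially in GR
  have hnt : Nontrivial V := by
    by_contra h
    rw [not_nontrivial_iff_subsingleton] at h
    refine hA' ⟨Unit, fun _ => (), fun σ => ⟨fun _ v w hvw => absurd (Subsingleton.elim v w) hvw,
      fun _ => ?_⟩⟩
    have : σ = 1 := Equiv.ext fun x => Subsingleton.elim _ _
    rw [this]; exact A.one_mem
  obtain ⟨C, E, hE⟩ := hA
  refine ⟨Option (Fin 2 ⊕ C), Sym2.lift ⟨fun p q => ccol E p q, ccol_symm E⟩, fun σ => ?_⟩
  constructor
  · -- σ ∈ PermProd → graph automorphism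
    rintro hσ
    obtain ⟨⟨a, b⟩, hab, rfl⟩ := Subgroup.mem_map.mp hσ
    obtain ⟨ha, hb⟩ := Subgroup.mem_prod.mp hab
    have hb1 : b = 1 := Subgroup.mem_bot.mp hb
    subst hb1
    have haut : IsDigraphAut E a := (hE a).mp ha
    rintro ⟨v, i⟩ ⟨w, j⟩ hne
    have happ : ∀ x : V, ∀ k : Fin 2, (permProdHom V (Fin 2)) (a, 1) (x, k) = (a x, k) :=
      fun _ _ => rfl
    rw [happ, happ, Sym2.lift_mk, Sym2.lift_mk]
    rcases eq_or_ne i j with hij | hij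
    · subst hij
      have hvw : v ≠ w := fun h => hne (by rw [h])
      have havw : a v ≠ a w := fun h => hvw (a.injective h)
      simp [ccol, hvw, havw]
    · rcases eq_or_ne v w with hvw | hvw
      · subst hvw
        simp [ccol, hij]
      · have havw : a v ≠ a w := fun h => hvw (a.injective h)
        simp only [ccol, if_neg hij, if_neg hvw, if_neg havw]
        rcases eq_or_ne i 0 with hi0 | hi0
        · simp [hi0, haut v w hvw]
        · simp [hi0, haut w v (Ne.symm hvw)]
  · -- graph automorphism → σ ∈ PermProd
    intro hσ
    have key : ∀ p q : V × Fin 2, p ≠ q → ccol E (σ p) (σ q) = ccol E p q := by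
      intro p q hpq
      have := hσ p q hpq
      rwa [Sym2.lift_mk, Sym2.lift_mk] at this
    -- σ preserves layers
    have hlayer : ∀ v : V, ∀ i : Fin 2, (σ (v, i)).2 = i := by
      intro v i
      obtain ⟨w, hw⟩ := exists_ne v
      have hne : (v, i) ≠ (w, i) := fun h => hw (congrArg Prod.fst h).symm
      have h := key _ _ hne
      have hrhs : ccol E (v, i) (w, i) = some (Sum.inl i) := by
        simp [ccol, (Ne.symm hw : v ≠ w)]
      rw [hrhs] at h
      by_cases h1 : (σ (v, i)).2 = (σ (w, i)).2
      · by_cases h2 : (σ (v, i)).1 = (σ (w, i)).1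
        · simp [ccol, h1, h2] at h
        · simp only [ccol, if_pos h1, if_neg h2, Option.some.injEq, Sum.inl.injEq] at h
          exact h
      · by_cases h2 : (σ (v, i)).1 = (σ (w, i)).1 <;> simp [ccol, h1, h2] at h
    set g : Fin 2 → V → V := fun i v => (σ (v, i)).1 with hg
    have hσeq : ∀ v i, σ (v, i) = (g i v, i) := by
      intro v i
      exact Prod.ext rfl (hlayer v i)
    -- vertical edges give g 0 = g 1
    have hvert : ∀ v : V, g 0 v = g 1 v := by
      intro v
      have hne : (v, (0 : Fin 2)) ≠ (v, 1) := fun h => by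
        have := congrArg Prod.snd h; simp at this
      have h := key _ _ hne
      rw [hσeq, hσeq] at h
      have hrhs : ccol E (v, (0 : Fin 2)) (v, 1) = none := by simp [ccol]
      rw [hrhs] at h
      by_cases h2 : g 0 v = g 1 v
      · exact h2
      · simp [ccol, h2, (by decide : (0 : Fin 2) ≠ 1)] at h
    -- g 0 is injective
    have hinj : Function.Injective (g 0) := by
      intro v w h
      have : σ (v, (0 : Fin 2)) = σ (w, 0) := by rw [hσeq, hσeq, h]
      exact (congrArg Prod.fst (σ.injective this))
    have hbij : Function.Bijective (g 0) := Finite.injective_iff_bijective.mp hinj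
    set a : Equiv.Perm V := Equiv.ofBijective (g 0) hbij with ha
    have haapp : ∀ v, a v = g 0 v := fun _ => rfl
    -- cross edges: g 0 preserves E
    have hcross : ∀ v w : V, v ≠ w → E (g 0 v, g 0 w) = E (v, w) := by
      intro v w hvw
      have hne : (v, (0 : Fin 2)) ≠ (w, 1) := fun h => by
        have := congrArg Prod.snd h; simp at this
      have h := key _ _ hne
      rw [hσeq, hσeq] at h
      rw [← hvert w] at h
      have hrhs : ccol E (v, (0 : Fin 2)) (w, 1) = some (Sum.inr (E (v, w))) := by
        simp [ccol, hvw, (by decide : (0 : Fin 2) ≠ 1)]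
      rw [hrhs] at h
      by_cases h2 : g 0 v = g 0 w
      · simp [ccol, h2, (by decide : (0 : Fin 2) ≠ 1)] at h
      · simp only [ccol, if_neg (by decide : ¬ (0 : Fin 2) = 1), if_neg h2,
          if_pos rfl, Option.some.injEq, Sum.inr.injEq] at h
        exact h
    have haA : a ∈ A := (hE a).mpr (fun v w hvw => hcross v w hvw)
    refine Subgroup.mem_map.mpr ⟨(a, 1), Subgroup.mem_prod.mpr ⟨haA, Subgroup.mem_bot.mpr rfl⟩, ?_⟩
    apply Equiv.ext
    rintro ⟨v, i⟩
    have : (permProdHom V (Fin 2)) (a, 1) (v, i) = (g 0 v, i) := rfl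
    rw [this, hσeq]
    rcases eq_or_ne i 0 with h | h
    · rw [h]
    · have h1 : i = 1 := by omega
      rw [h1, ← hvert]
end

section
/- Let (A,V) and (B,W) be permutation groups with A, B ∈ DGR \ (GR ∪ {I₂}). Suppose there exists a ∈ Ā \ A which pairs all the pairs of paired Or-orbitals of A (that is, for every pair of Or-orbitals O₁ ≠ O₂ of A that are paired with each other, a(O₁) = O₂), and there exists b ∈ B̄ \ B which pairs all the pairs of paired Or-orbitals of B. Then the direct product A × B does not belong to GR; moreover, A × B is transitive on V × W. -/
/-!
A permutation `a ∈ Ā` that pairs all paired Or-orbitals of `A` reverses every Or-orbital: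
`(a v, a w)` lies in the orbital of `(w, v)`. On at least three points such a reversal forces
`A` to be transitive, and `(a, b)` then reverses every Or-orbital of `A × B`. A reversal maps
every NOr-orbital onto itself, so if `A × B` were in `GR` then `(a, b) ∈ A × B`, i.e. `a ∈ A`.
-/

/-- Every Or-orbital `O` of `A` is mapped by `σ` onto `O*`. -/
def ReversesOrbitals {V : Type} (A : Subgroup (Equiv.Perm V)) (σ : Equiv.Perm V) : Prop :=
  ∀ v w : V, v ≠ w → (σ v, σ w) ∈ Orbital A w v

theorem IsGR.mem_of_preservesNOrOrbitals {V : Type} {A : Subgroup (Equiv.Perm V)}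
    (hA : IsGR A) {σ : Equiv.Perm V} (hσ : PreservesNOrOrbitals A σ) : σ ∈ A := by
  obtain ⟨C, E, hE⟩ := hA
  rw [hE]
  intro v w hvw
  obtain ⟨α, hα, hαvw⟩ := hσ v w hvw
  rw [hαvw]
  exact (hE α).mp hα v w hvw

theorem ReversesOrbitals.preservesNOrOrbitals {V : Type} {A : Subgroup (Equiv.Perm V)}
    {σ : Equiv.Perm V} (hσ : ReversesOrbitals A σ) : PreservesNOrOrbitals A σ := by
  intro v w hvw
  obtain ⟨α, hα, hαvw⟩ := hσ v w hvw
  obtain ⟨hv, hw⟩ := Prod.mk.inj hαvw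
  exact ⟨α, hα, by rw [hv, hw, Sym2.eq_swap]⟩

theorem reversesOrbitals_of_pairsAllPairedOrbitals {V : Type} {A : Subgroup (Equiv.Perm V)}
    {σ : Equiv.Perm V} (hσA : σ ∈ grClosure A) (hσ : PairsAllPairedOrbitals A σ) :
    ReversesOrbitals A σ := by
  intro v w hvw
  by_cases hsp : SelfPaired A v w
  · obtain ⟨α, hα, hαvw⟩ := hσA v w hvw
    rcases Sym2.eq_iff.mp hαvw with ⟨hv, hw⟩ | ⟨hv, hw⟩
    · rw [← hsp, hv, hw]
      exact ⟨α, hα, rfl⟩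
    · exact ⟨α, hα, by rw [hv, hw]⟩
  · rw [← hσ v w hvw hsp]
    exact ⟨(v, w), ⟨1, A.one_mem, rfl⟩, rfl⟩

open Finset in
/-- Composing the reversals of `(x, v)` and `(x, w)` through a third point `x` carries `v`
to `w`. -/
theorem ReversesOrbitals.exists_mem_apply_eq {V : Type} [Fintype V]
    {A : Subgroup (Equiv.Perm V)} {σ : Equiv.Perm V} (hσ : ReversesOrbitals A σ)
    (hV : 3 ≤ Fintype.card V) (v w : V) : ∃ α ∈ A, α v = w := by
  classical
  obtain ⟨x, -, hx⟩ := exists_mem_notMem_of_card_lt_card (s := ({v, w} : Finset V))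
    (t := univ) ((card_le_two).trans_lt (by rwa [card_univ]))
  simp only [mem_insert, mem_singleton, not_or] at hx
  obtain ⟨α, hα, hαv⟩ := hσ x v hx.1
  obtain ⟨β, hβ, hβw⟩ := hσ x w hx.2
  refine ⟨β⁻¹ * α, A.mul_mem (A.inv_mem hβ) hα, ?_⟩
  rw [Equiv.Perm.mul_apply, Equiv.Perm.inv_eq_iff_eq]
  exact (congrArg Prod.fst hαv).symm.trans (congrArg Prod.fst hβw)

theorem isI₂_of_card_le_two {V : Type} [Fintype V] {A : Subgroup (Equiv.Perm V)}
    (hV : Fintype.card V ≤ 2) (hA : A ≠ ⊤) : IsI₂ A := by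
  have hV2 : Fintype.card V = 2 := by
    refine le_antisymm hV (not_lt.mp fun h1 => hA ?_)
    have : Subsingleton V := Fintype.card_le_one_iff_subsingleton.mp (by omega)
    exact A.eq_top_iff'.mpr fun σ =>
      (Equiv.ext fun _ => Subsingleton.elim _ _ : (1 : Equiv.Perm V) = σ) ▸ A.one_mem
  have hdvd : Nat.card A ∣ 2 := by
    simpa [Nat.card_perm, hV2] using A.card_subgroup_dvd_card
  refine ⟨hV2, A.eq_bot_of_card_eq ?_⟩
  refine ((Nat.dvd_prime Nat.prime_two).mp hdvd).resolve_right fun h => hA ?_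
  exact A.eq_top_of_card_eq (by simp [h, Nat.card_perm, hV2])

theorem permProdHom_mem_permProd {V W : Type} {A : Subgroup (Equiv.Perm V)}
    {B : Subgroup (Equiv.Perm W)} {α : Equiv.Perm V} {β : Equiv.Perm W} (hα : α ∈ A)
    (hβ : β ∈ B) : permProdHom V W (α, β) ∈ PermProd A B :=
  Subgroup.mem_map.mpr ⟨(α, β), Subgroup.mem_prod.mpr ⟨hα, hβ⟩, rfl⟩

theorem mem_of_permProdHom_mem_permProd {V W : Type} [Nonempty W]
    {A : Subgroup (Equiv.Perm V)} {B : Subgroup (Equiv.Perm W)} {α : Equiv.Perm V}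
    {β : Equiv.Perm W} (h : permProdHom V W (α, β) ∈ PermProd A B) : α ∈ A := by
  obtain ⟨⟨α', β'⟩, hmem, heq⟩ := Subgroup.mem_map.mp h
  obtain ⟨w⟩ := ‹Nonempty W›
  have : α' = α := Equiv.ext fun v => congrArg (fun e : Equiv.Perm (V × W) => (e (v, w)).1) heq
  exact this ▸ (Subgroup.mem_prod.mp hmem).1

theorem ReversesOrbitals.exists_mem_apply_swap {V : Type} {A : Subgroup (Equiv.Perm V)}
    {σ : Equiv.Perm V} (hσ : ReversesOrbitals A σ) (hA : ∀ v v' : V, ∃ α ∈ A, α v = v')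
    (v v' : V) : ∃ α ∈ A, α v' = σ v ∧ α v = σ v' := by
  rcases eq_or_ne v v' with rfl | hv
  · obtain ⟨α, hα, hαv⟩ := hA v (σ v)
    exact ⟨α, hα, hαv, hαv⟩
  · obtain ⟨α, hα, hαv⟩ := hσ v v' hv
    exact ⟨α, hα, (congrArg Prod.fst hαv).symm, (congrArg Prod.snd hαv).symm⟩

section Product

variable {V W : Type} {A : Subgroup (Equiv.Perm V)} {B : Subgroup (Equiv.Perm W)}

theorem permProd_exists_mem_apply_eq (hA : ∀ v v' : V, ∃ α ∈ A, α v = v')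
    (hB : ∀ w w' : W, ∃ β ∈ B, β w = w') (p q : V × W) :
    ∃ σ ∈ PermProd A B, σ p = q := by
  obtain ⟨α, hα, hαp⟩ := hA p.1 q.1
  obtain ⟨β, hβ, hβp⟩ := hB p.2 q.2
  exact ⟨_, permProdHom_mem_permProd hα hβ, Prod.ext hαp hβp⟩

theorem ReversesOrbitals.permProd {a : Equiv.Perm V} {b : Equiv.Perm W}
    (ha : ReversesOrbitals A a) (hb : ReversesOrbitals B b)
    (hA : ∀ v v' : V, ∃ α ∈ A, α v = v') (hB : ∀ w w' : W, ∃ β ∈ B, β w = w') :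
    ReversesOrbitals (PermProd A B) (permProdHom V W (a, b)) := by
  rintro ⟨v, w⟩ ⟨v', w'⟩ -
  obtain ⟨α, hα, hαv', hαv⟩ := ha.exists_mem_apply_swap hA v v'
  obtain ⟨β, hβ, hβw', hβw⟩ := hb.exists_mem_apply_swap hB w w'
  refine ⟨_, permProdHom_mem_permProd hα hβ, ?_⟩
  change ((a v, b w), (a v', b w')) = ((α v', β w'), (α v, β w))
  rw [hαv', hβw', hαv, hβw]

end Product

theorem not_isGR_prod_of_pairing_general {V W : Type} [Fintype V] [Fintype W]
    (A : Subgroup (Equiv.Perm V)) (B : Subgroup (Equiv.Perm W))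
    (hA2 : ¬ IsI₂ A) (hB2 : ¬ IsI₂ B)
    (ha : ∃ a ∈ grClosure A, a ∉ A ∧ PairsAllPairedOrbitals A a)
    (hb : ∃ b ∈ grClosure B, b ∉ B ∧ PairsAllPairedOrbitals B b) :
    ¬ IsGR (PermProd A B) ∧ ∀ p q : V × W, ∃ σ ∈ PermProd A B, σ p = q := by
  obtain ⟨a, haA, ha_notMem, ha_pairs⟩ := ha
  obtain ⟨b, hbB, hb_notMem, hb_pairs⟩ := hb
  have hV : 3 ≤ Fintype.card V := by
    by_contra! h
    exact hA2 (isI₂_of_card_le_two (by omega) fun htop => ha_notMem (htop ▸ Subgroup.mem_top a))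
  have hW : 3 ≤ Fintype.card W := by
    by_contra! h
    exact hB2 (isI₂_of_card_le_two (by omega) fun htop => hb_notMem (htop ▸ Subgroup.mem_top b))
  have : Nonempty W := Fintype.card_pos_iff.mp (by omega)
  have rev_a := reversesOrbitals_of_pairsAllPairedOrbitals haA ha_pairs
  have rev_b := reversesOrbitals_of_pairsAllPairedOrbitals hbB hb_pairs
  have trans_A := rev_a.exists_mem_apply_eq hV
  have trans_B := rev_b.exists_mem_apply_eq hW
  refine ⟨fun hGR => ha_notMem ?_, permProd_exists_mem_apply_eq trans_A trans_B⟩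
  exact mem_of_permProdHom_mem_permProd (β := b)
    (hGR.mem_of_preservesNOrOrbitals (rev_a.permProd rev_b trans_A trans_B).preservesNOrOrbitals)

/-- If `A, B ∈ DGR \ (GR ∪ {I₂})`, some `a ∈ Ā \ A` pairs all the pairs of
paired Or-orbitals of `A`, and some `b ∈ B̄ \ B` pairs all the pairs of paired
Or-orbitals of `B`, then `A × B ∉ GR`; moreover, `A × B` is transitive. -/
theorem not_isGR_prod_of_pairing {V W : Type} [Fintype V] [Fintype W]
    (A : Subgroup (Equiv.Perm V)) (B : Subgroup (Equiv.Perm W))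
    (hA : IsDGR A) (hA' : ¬ IsGR A) (hA2 : ¬ IsI₂ A)
    (hB : IsDGR B) (hB' : ¬ IsGR B) (hB2 : ¬ IsI₂ B)
    (ha : ∃ a ∈ grClosure A, a ∉ A ∧ PairsAllPairedOrbitals A a)
    (hb : ∃ b ∈ grClosure B, b ∉ B ∧ PairsAllPairedOrbitals B b) :
    ¬ IsGR (PermProd A B) ∧ ∀ p q : V × W, ∃ σ ∈ PermProd A B, σ p = q :=
  not_isGR_prod_of_pairing_general A B hA2 hB2 ha hb
end

section
/- Let G be a finite group, regarded as a regular permutation group acting on itself by left multiplication. If G is neither an abelian group containing an element of order greater than 2, nor a generalized dicyclic group, then G belongs to GR, i.e., G is the automorphism group of an edge-colored graph on the set G. -/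
/-- A finite group `G` is generalized dicyclic if it is non-abelian and has an
abelian subgroup `H` of index `2` and an element `x ∉ H` of order `4` with
`x * a * x⁻¹ = a⁻¹` for all `a ∈ H`. -/
def IsGeneralizedDicyclic (G : Type) [Group G] : Prop :=
  (¬ ∀ a b : G, a * b = b * a) ∧
  ∃ (H : Subgroup G) (x : G), (∀ a ∈ H, ∀ b ∈ H, a * b = b * a) ∧
    H.index = 2 ∧ orderOf x = 4 ∧ x ∉ H ∧ ∀ a ∈ H, x * a * x⁻¹ = a⁻¹

section Aux

variable {G : Type} [Group G]

/-- The centralizer of a single element, as a subgroup. -/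
def myCent (x : G) : Subgroup G where
  carrier := {g | g * x = x * g}
  one_mem' := by simp
  mul_mem' := by
    intro u v hu hv
    simp only [Set.mem_setOf_eq] at *
    rw [mul_assoc, hv, ← mul_assoc, hu, mul_assoc]
  inv_mem' := by
    intro u hu
    simp only [Set.mem_setOf_eq] at *
    have h : u * (u⁻¹ * x) = u * (x * u⁻¹) := by
      calc u * (u⁻¹ * x) = x := by simp
        _ = (x * u) * u⁻¹ := by simp
        _ = (u * x) * u⁻¹ := by rw [← hu]
        _ = u * (x * u⁻¹) := by rw [mul_assoc]
    exact mul_left_cancel h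

lemma mem_myCent {x g : G} : g ∈ myCent x ↔ g * x = x * g := Iff.rfl

lemma orderOf_eq_four (y : G) (h4 : y ^ 4 = 1) (h2 : y * y ≠ 1) : orderOf y = 4 := by
  have h1 : y ≠ 1 := by intro h; apply h2; rw [h]; simp
  have hdvd : orderOf y ∣ 4 := orderOf_dvd_of_pow_eq_one h4
  have hle : orderOf y ≤ 4 := Nat.le_of_dvd (by norm_num) hdvd
  have hne0 : orderOf y ≠ 0 := by
    intro h; rw [h] at hdvd; norm_num at hdvd
  have hne1 : orderOf y ≠ 1 := fun h => h1 (orderOf_eq_one_iff.mp h)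
  have hne2 : orderOf y ≠ 2 := by
    intro h; apply h2
    have := pow_orderOf_eq_one y
    rw [h, pow_two] at this; exact this
  have hne3 : orderOf y ≠ 3 := by
    intro h; rw [h] at hdvd; norm_num at hdvd
  omega

/-- Case 1: every pair of elements commutes or has equal squares, with a
noncommuting pair: then `G` is generalized dicyclic. -/
lemma genDicyclic_of_P (P : ∀ x y : G, x * y = y * x ∨ x * x = y * y)
    (x y : G) (hxy : x * y ≠ y * x) : IsGeneralizedDicyclic G := by
  -- L2 : noncommuting pairs conjugate-invert each other
  have hL2 : ∀ u v : G, u * v ≠ v * u → v * u * v⁻¹ = u⁻¹ := by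
    intro u v huv
    have h1 : ¬ ((u * v) * v = v * (u * v)) := by
      intro h
      apply huv
      have h' : (u * v) * v = (v * u) * v := by rw [h]; group
      exact mul_right_cancel h'
    have h := (P (u * v) v).resolve_left h1
    have h2 : v * u = u⁻¹ * v := by
      calc v * u = u⁻¹ * ((u * v) * (u * v)) * v⁻¹ := by group
        _ = u⁻¹ * (v * v) * v⁻¹ := by rw [h]
        _ = u⁻¹ * v := by group
    calc v * u * v⁻¹ = (u⁻¹ * v) * v⁻¹ := by rw [h2]
      _ = u⁻¹ := by group
  have hs : x * x = y * y := (P x y).resolve_left hxy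
  have hyx : y * x * y⁻¹ = x⁻¹ := hL2 x y hxy
  have hs1 : x * x ≠ 1 := by
    intro h
    have hinv : x⁻¹ = x := inv_eq_of_mul_eq_one_right h
    apply hxy
    have : y * x = x * y := by
      calc y * x = (y * x * y⁻¹) * y := by group
        _ = x⁻¹ * y := by rw [hyx]
        _ = x * y := by rw [hinv]
    exact this.symm
  set H : Subgroup G := myCent x with hH
  have habH : ∀ u ∈ H, ∀ v ∈ H, u * v = v * u := by
    intro u hu v hv
    rw [hH, mem_myCent] at hu hv
    by_contra huv
    have hxuv : (x * u) * v ≠ v * (x * u) := by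
      intro h
      apply huv
      have hx : x * (u * v) = x * (v * u) := by
        calc x * (u * v) = (x * u) * v := by group
          _ = v * (x * u) := h
          _ = (v * x) * u := by group
          _ = (x * v) * u := by rw [← hv]
          _ = x * (v * u) := by group
      exact mul_left_cancel hx
    have hP := (P (x * u) v).resolve_left hxuv
    have huv2 : u * u = v * v := (P u v).resolve_left huv
    have hx2 : (x * u) * (x * u) = (x * x) * (u * u) := by
      calc (x * u) * (x * u) = x * (u * x) * u := by group
        _ = x * (x * u) * u := by rw [hu]
        _ = (x * x) * (u * u) := by group
    apply hs1
    have hfin : (x * x) * (u * u) = 1 * (u * u) := by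
      rw [← hx2, hP, ← huv2, one_mul]
    exact mul_right_cancel hfin
  have hyH : y ∉ H := by
    intro h
    rw [hH, mem_myCent] at h
    exact hxy h.symm
  have hbx' : ∀ b : G, b ∉ H → b * x = x⁻¹ * b := by
    intro b hb
    have hbH : b * x ≠ x * b := by
      intro h; exact hb (by rw [hH, mem_myCent]; exact h)
    have hbinv : b * x * b⁻¹ = x⁻¹ := hL2 x b (fun h => hbH h.symm)
    calc b * x = (b * x * b⁻¹) * b := by group
      _ = x⁻¹ * b := by rw [hbinv]
  have hindex : H.index = 2 := by
    rw [Subgroup.index_eq_two_iff]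
    refine ⟨y, fun b => ?_⟩
    by_cases hbC : b ∈ H
    · refine Or.inr ⟨hbC, fun hby => hyH ?_⟩
      have h := H.mul_mem (H.inv_mem hbC) hby
      rwa [show b⁻¹ * (b * y) = y by group] at h
    · refine Or.inl ⟨?_, hbC⟩
      have hbx : b * x = x⁻¹ * b := hbx' b hbC
      have hyx2 : y * x = x⁻¹ * y := hbx' y hyH
      have hbi : x * b = b * x⁻¹ := by
        calc x * b = x * (b * x) * x⁻¹ := by group
          _ = x * (x⁻¹ * b) * x⁻¹ := by rw [hbx]
          _ = b * x⁻¹ := by group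
      rw [hH, mem_myCent]
      calc (b * y) * x = b * (y * x) := by group
        _ = b * (x⁻¹ * y) := by rw [hyx2]
        _ = (b * x⁻¹) * y := by group
        _ = (x * b) * y := by rw [← hbi]
        _ = x * (b * y) := by group
  have hxx : x⁻¹ * x⁻¹ = y * y := by
    have hxy' : x⁻¹ * y ≠ y * x⁻¹ := by
      intro h
      apply hxy
      calc x * y = x * (y * x⁻¹) * x := by group
        _ = x * (x⁻¹ * y) * x := by rw [← h]
        _ = y * x := by group
    exact (P x⁻¹ y).resolve_left hxy'
  have hinv2 : x⁻¹ * x⁻¹ = x * x := by rw [hxx, ← hs]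
  have hss : (x * x) * (x * x) = 1 := by
    calc (x * x) * (x * x) = (x * x) * (x⁻¹ * x⁻¹) := by rw [hinv2]
      _ = 1 := by group
  have hy4 : y ^ 4 = 1 := by
    have h : y ^ 4 = (y * y) * (y * y) := by
      rw [show (4 : ℕ) = 2 * 2 from rfl, pow_mul, pow_two, pow_two]
    rw [h, ← hs, hss]
  have hyy : y * y ≠ 1 := by rw [← hs]; exact hs1
  have horder : orderOf y = 4 := orderOf_eq_four y hy4 hyy
  have hconj : ∀ h ∈ H, y * h * y⁻¹ = h⁻¹ := by
    intro h hh
    rw [hH, mem_myCent] at hh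
    by_cases hhy : h * y = y * h
    · -- h commutes with both x and y; show h * h = 1
      have hxyh : (h * y) * x ≠ x * (h * y) := by
        intro heq
        apply hxy
        have hc : h * (y * x) = h * (x * y) := by
          calc h * (y * x) = (h * y) * x := by group
            _ = x * (h * y) := heq
            _ = (x * h) * y := by group
            _ = (h * x) * y := by rw [← hh]
            _ = h * (x * y) := by group
        exact (mul_left_cancel hc).symm
      have hP := (P (h * y) x).resolve_left hxyh
      have hhyy : (h * h) * (y * y) = (h * y) * (h * y) := by
        calc (h * h) * (y * y) = h * (h * y) * y := by group
          _ = h * (y * h) * y := by rw [hhy]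
          _ = (h * y) * (h * y) := by group
      have hh1 : h * h = 1 := by
        have hfin : (h * h) * (x * x) = 1 * (x * x) := by
          rw [hs, hhyy, hP, ← hs, one_mul]
        exact mul_right_cancel hfin
      have hinvh : h⁻¹ = h := inv_eq_of_mul_eq_one_right hh1
      calc y * h * y⁻¹ = (y * h) * y⁻¹ := by group
        _ = (h * y) * y⁻¹ := by rw [← hhy]
        _ = h := by group
        _ = h⁻¹ := hinvh.symm
    · exact hL2 h y hhy
  exact ⟨fun hc => hxy (hc x y), H, y, habH, hindex, horder, hyH, hconj⟩

/-- Case 2: there is a strictly inverted element `a` and a strictly fixed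
element `b₀`: then `G` is generalized dicyclic. -/
lemma genDicyclic_of_mixed (τ : G → G)
    (hp : ∀ x y : G, x ≠ y → (τ x)⁻¹ * τ y = x⁻¹ * y ∨ (τ x)⁻¹ * τ y = y⁻¹ * x)
    (hstep0 : ∀ g : G, τ g = g ∨ τ g = g⁻¹)
    (a b₀ : G) (ha : τ a = a⁻¹) (ha2 : a * a ≠ 1)
    (hb : τ b₀ = b₀) (hb2 : b₀ * b₀ ≠ 1) : IsGeneralizedDicyclic G := by
  -- every element is fixed, or strictly inverted
  have hsplit : ∀ u : G, τ u = u ∨ (τ u = u⁻¹ ∧ u * u ≠ 1) := by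
    intro u
    rcases hstep0 u with h | h
    · exact Or.inl h
    · by_cases h2 : u * u = 1
      · exact Or.inl (by rw [h, inv_eq_of_mul_eq_one_right h2])
      · exact Or.inr ⟨h, h2⟩
  -- Fact A: a strictly inverted element `g` anti-commutes with any fixed `b`
  have hA : ∀ g : G, τ g = g⁻¹ → g * g ≠ 1 → ∀ b : G, τ b = b → g * b = b⁻¹ * g := by
    intro g hg hg2 b hbb
    have hgb : g ≠ b := by
      intro h
      subst h
      apply hg2
      have hinv : g = g⁻¹ := hbb.symm.trans hg
      calc g * g = g * g⁻¹ := by rw [← hinv]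
        _ = 1 := by group
    rcases hp g b hgb with h | h
    · exfalso
      apply hg2
      rw [hg, hbb] at h
      have h' : g * b = g⁻¹ * b := by rw [← h]; group
      have : g = g⁻¹ := mul_right_cancel h'
      calc g * g = g * g⁻¹ := by rw [← this]
        _ = 1 := by group
    · rw [hg, hbb] at h
      rw [← h]; group
  -- Fact B: products of fixed elements that are fixed commute
  have hB : ∀ b c : G, τ b = b → τ c = c → τ (b * c) = b * c → b * c = c * b := by
    intro b c hbf hcf hbcf
    have h1 := hA a ha ha2 (b * c) hbcf
    have h2 := hA a ha ha2 b hbf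
    have h3 := hA a ha ha2 c hcf
    have h4 : (b * c)⁻¹ * a = (b⁻¹ * c⁻¹) * a := by
      calc (b * c)⁻¹ * a = a * (b * c) := h1.symm
        _ = (a * b) * c := by group
        _ = (b⁻¹ * a) * c := by rw [h2]
        _ = b⁻¹ * (a * c) := by group
        _ = b⁻¹ * (c⁻¹ * a) := by rw [h3]
        _ = (b⁻¹ * c⁻¹) * a := by group
    have h5 : (b * c)⁻¹ = b⁻¹ * c⁻¹ := mul_right_cancel h4
    have h6 : c⁻¹ * b⁻¹ = b⁻¹ * c⁻¹ := by rw [← mul_inv_rev]; exact h5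
    calc b * c = (c⁻¹ * b⁻¹)⁻¹ := by group
      _ = (b⁻¹ * c⁻¹)⁻¹ := by rw [h6]
      _ = c * b := by group
  set H : Subgroup G := myCent b₀ with hH
  -- every member of the centralizer of b₀ is fixed by τ
  have memfix : ∀ u : G, u * b₀ = b₀ * u → τ u = u := by
    intro u hu
    rcases hsplit u with h | ⟨h, h2⟩
    · exact h
    · exfalso
      apply hb2
      have h3 := hA u h h2 b₀ hb
      have h4 : b₀ * u = b₀⁻¹ * u := hu.symm.trans h3
      have h5 : b₀ = b₀⁻¹ := mul_right_cancel h4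
      calc b₀ * b₀ = b₀ * b₀⁻¹ := by rw [← h5]
        _ = 1 := by group
  have hab0 : a * b₀ = b₀⁻¹ * a := hA a ha ha2 b₀ hb
  have hab0' : b₀ * a = a * b₀⁻¹ := by
    calc b₀ * a = b₀ * (a * b₀) * b₀⁻¹ := by group
      _ = b₀ * (b₀⁻¹ * a) * b₀⁻¹ := by rw [hab0]
      _ = a * b₀⁻¹ := by group
  have habH : ∀ u ∈ H, ∀ v ∈ H, u * v = v * u := by
    intro u hu v hv
    rw [hH, mem_myCent] at hu hv
    have huv : (u * v) * b₀ = b₀ * (u * v) := by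
      calc (u * v) * b₀ = u * (v * b₀) := by group
        _ = u * (b₀ * v) := by rw [hv]
        _ = (u * b₀) * v := by group
        _ = (b₀ * u) * v := by rw [hu]
        _ = b₀ * (u * v) := by group
    exact hB u v (memfix u hu) (memfix v hv) (memfix (u * v) huv)
  have haH : a ∉ H := by
    intro h
    rw [hH, mem_myCent] at h
    have h2 : τ a = a := memfix a h
    have h3 : a⁻¹ = a := ha.symm.trans h2
    apply ha2
    calc a * a = a * a⁻¹ := by rw [h3]
      _ = 1 := by group
  -- every element outside the centralizer anti-commutes with b₀
  have hinvC : ∀ g : G, g ∉ H → g * b₀ = b₀⁻¹ * g := by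
    intro g hg
    rw [hH] at hg
    rcases hsplit g with hgf | ⟨hgi, hg2⟩
    · rcases hsplit (g * b₀) with hdf | ⟨hdi, hd2⟩
      · exact absurd (hB g b₀ hgf hb hdf) (fun h => hg (mem_myCent.mpr h))
      · have h := hA (g * b₀) hdi hd2 b₀ hb
        have h2 : (g * b₀) * b₀ = (b₀⁻¹ * g) * b₀ := by
          calc (g * b₀) * b₀ = b₀⁻¹ * (g * b₀) := h
            _ = (b₀⁻¹ * g) * b₀ := by group
        exact mul_right_cancel h2
    · exact hA g hgi hg2 b₀ hb
  have hindex : H.index = 2 := by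
    rw [Subgroup.index_eq_two_iff]
    refine ⟨a, fun b => ?_⟩
    by_cases hbC : b ∈ H
    · refine Or.inr ⟨hbC, fun hba => haH ?_⟩
      have h := H.mul_mem (H.inv_mem hbC) hba
      rwa [show b⁻¹ * (b * a) = a by group] at h
    · refine Or.inl ⟨?_, hbC⟩
      have hbinv : b * b₀ = b₀⁻¹ * b := hinvC b hbC
      have hbinv' : b₀ * b = b * b₀⁻¹ := by
        calc b₀ * b = b₀ * (b * b₀) * b₀⁻¹ := by group
          _ = b₀ * (b₀⁻¹ * b) * b₀⁻¹ := by rw [hbinv]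
          _ = b * b₀⁻¹ := by group
      rw [hH, mem_myCent]
      calc (b * a) * b₀ = b * (a * b₀) := by group
        _ = b * (b₀⁻¹ * a) := by rw [hab0]
        _ = (b * b₀⁻¹) * a := by group
        _ = (b₀ * b) * a := by rw [← hbinv']
        _ = b₀ * (b * a) := by group
  have ha2H : (a * a) * b₀ = b₀ * (a * a) := by
    calc (a * a) * b₀ = a * (a * b₀) := by group
      _ = a * (b₀⁻¹ * a) := by rw [hab0]
      _ = (a * b₀⁻¹) * a := by group
      _ = (b₀ * a) * a := by rw [← hab0']
      _ = b₀ * (a * a) := by group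
  have horder : orderOf a = 4 := by
    have hfix2 : τ (a * a) = a * a := memfix (a * a) ha2H
    have h := hA a ha ha2 (a * a) hfix2
    have ha4 : a ^ 4 = 1 := by
      have h44 : a ^ 4 = (a * (a * a)) * a := by
        rw [show (4 : ℕ) = 2 * 2 from rfl, pow_mul, pow_two, pow_two]
        group
      rw [h44, h]
      group
    exact orderOf_eq_four a ha4 ha2
  have hconj : ∀ h ∈ H, a * h * a⁻¹ = h⁻¹ := by
    intro h hh
    rw [hH, mem_myCent] at hh
    have hf := memfix h hh
    have h2 := hA a ha ha2 h hf
    calc a * h * a⁻¹ = (a * h) * a⁻¹ := by group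
      _ = (h⁻¹ * a) * a⁻¹ := by rw [h2]
      _ = h⁻¹ := by group
  have hna : ¬ ∀ u v : G, u * v = v * u := by
    intro hc
    apply hb2
    have h : b₀ * a = b₀⁻¹ * a := (hc a b₀).symm.trans hab0
    have h2 : b₀ = b₀⁻¹ := mul_right_cancel h
    calc b₀ * b₀ = b₀ * b₀⁻¹ := by rw [← h2]
      _ = 1 := by group
  exact ⟨hna, H, a, habH, hindex, horder, haH, hconj⟩

/-- The key rigidity lemma. -/
lemma key_rigidity [Fintype G]
    (h1 : ¬ ((∀ a b : G, a * b = b * a) ∧ ∃ g : G, 2 < orderOf g))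
    (h2 : ¬ IsGeneralizedDicyclic G)
    (τ : G → G) (h0 : τ 1 = 1)
    (hp : ∀ x y : G, x ≠ y → (τ x)⁻¹ * τ y = x⁻¹ * y ∨ (τ x)⁻¹ * τ y = y⁻¹ * x) :
    ∀ g : G, τ g = g := by
  by_contra hne
  push_neg at hne
  obtain ⟨w, hw⟩ := hne
  have hstep0 : ∀ g : G, τ g = g ∨ τ g = g⁻¹ := by
    intro g
    by_cases hg : g = 1
    · subst hg; exact Or.inl h0
    · rcases hp 1 g (fun h => hg h.symm) with h | h
      · left; rw [h0] at h; simpa using h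
      · right; rw [h0] at h; simpa using h
  have ha : τ w = w⁻¹ := (hstep0 w).resolve_left hw
  have ha2 : w * w ≠ 1 := by
    intro h
    exact hw (by rw [ha, inv_eq_of_mul_eq_one_right h])
  by_cases hF : ∃ b : G, τ b = b ∧ b * b ≠ 1
  · obtain ⟨b₀, hb, hb2⟩ := hF
    exact h2 (genDicyclic_of_mixed τ hp hstep0 w b₀ ha ha2 hb hb2)
  · push_neg at hF
    have hinvall : ∀ g : G, τ g = g⁻¹ := by
      intro g
      rcases hstep0 g with h | h
      · rw [h]; exact (inv_eq_of_mul_eq_one_right (hF g h)).symm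
      · exact h
    have P : ∀ x y : G, x * y = y * x ∨ x * x = y * y := by
      intro x y
      by_cases hxy : x = y
      · left; rw [hxy]
      · rcases hp x y hxy with h | h
        · right
          rw [hinvall x, hinvall y] at h
          have h' : x * y⁻¹ = x⁻¹ * y := by rw [← h]; group
          calc x * x = x * (x * y⁻¹) * y := by group
            _ = x * (x⁻¹ * y) * y := by rw [h']
            _ = y * y := by group
        · left
          rw [hinvall x, hinvall y] at h
          have h' : x * y⁻¹ = y⁻¹ * x := by rw [← h]; group
          calc x * y = y * (y⁻¹ * x) * y := by group
            _ = y * (x * y⁻¹) * y := by rw [← h']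
            _ = y * x := by group
    by_cases hab : ∀ u v : G, u * v = v * u
    · apply h1
      refine ⟨hab, w, ?_⟩
      have hpos : 0 < orderOf w := orderOf_pos w
      have hne1 : orderOf w ≠ 1 := by
        intro h
        apply ha2
        rw [orderOf_eq_one_iff.mp h]; simp
      have hne2 : orderOf w ≠ 2 := by
        intro h
        apply ha2
        have := pow_orderOf_eq_one w
        rw [h, pow_two] at this
        exact this
      omega
    · push_neg at hab
      obtain ⟨u, v, huv⟩ := hab
      exact h2 (genDicyclic_of_P P u v huv)

end Aux


/-- If a finite group `G` is neither abelian with an element of order greater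
than two nor generalized dicyclic, then its regular action (by left
multiplication) belongs to `GR`. -/
theorem regular_isGR (G : Type) [Group G] [Fintype G]
    (h1 : ¬ ((∀ a b : G, a * b = b * a) ∧ ∃ g : G, 2 < orderOf g))
    (h2 : ¬ IsGeneralizedDicyclic G) :
    IsGR (MulAction.toPermHom G G).range := by
  classical
  refine ⟨Sym2 G, Sym2.lift ⟨fun x y => s(x⁻¹ * y, y⁻¹ * x), fun x y => Sym2.eq_swap⟩, fun σ => ?_⟩
  constructor
  · intro hσ
    rw [MonoidHom.mem_range] at hσ
    obtain ⟨g, rfl⟩ := hσ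
    intro v w hvw
    simp only [MulAction.toPermHom_apply, MulAction.toPerm_apply, smul_eq_mul, Sym2.lift_mk]
    have e1 : (g * v)⁻¹ * (g * w) = v⁻¹ * w := by group
    have e2 : (g * w)⁻¹ * (g * v) = w⁻¹ * v := by group
    rw [e1, e2]
  · intro hσ
    set τ : G → G := fun x => (σ 1)⁻¹ * σ x with hτ
    have h0 : τ 1 = 1 := by simp [hτ]
    have hp : ∀ x y : G, x ≠ y → (τ x)⁻¹ * τ y = x⁻¹ * y ∨ (τ x)⁻¹ * τ y = y⁻¹ * x := by
      intro x y hxy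
      have h := hσ x y hxy
      simp only [Sym2.lift_mk] at h
      have h2 := Sym2.eq_iff.mp h
      have e : (τ x)⁻¹ * τ y = (σ x)⁻¹ * σ y := by
        simp only [hτ]
        group
      rcases h2 with ⟨hl, _⟩ | ⟨hl, _⟩
      · left; rw [e, hl]
      · right; rw [e, hl]
    have hid := key_rigidity h1 h2 τ h0 hp
    rw [MonoidHom.mem_range]
    refine ⟨σ 1, ?_⟩
    ext x
    have hx : (σ 1)⁻¹ * σ x = x := hid x
    simp only [MulAction.toPermHom_apply, MulAction.toPerm_apply, smul_eq_mul]
    calc σ 1 * x = σ 1 * ((σ 1)⁻¹ * σ x) := by rw [hx]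
      _ = σ x := by group
end
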